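/- arXiv:1408.3220 — 3 statements merged into one kernel-verified Lean document; each statement's English description precedes it below -/
import Mathlib

section
/- Let (Y_i)_{i∈ℕ} be an i.i.d. sequence of nonnegative real-valued random variables, let r > 0, and set M'_n := max_{1≤j≤n} Y_j. If E[(log⁺ Y_1)^r] = ∞, then for every constant c > 0, almost surely M'_n ≥ exp(c n^{1/r}) for infinitely many n ∈ ℕ. -/
/-!
Put `X := (log⁺ Y₁)^r` and `a := c^r`. Since `X ≤ a · #{n | a n ≤ X}`, infinite expectation of
`X` forces `∑ₙ P(a n ≤ X) = ∞`. By identical distribution this is `∑ₙ P(a n ≤ (log⁺ Yₙ)^r)`, so the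
second Borel–Cantelli lemma gives, almost surely, `c^r n ≤ (log⁺ Yₙ)^r`, i.e.
`exp (c n^{1/r}) ≤ Yₙ ≤ M'ₙ`, for infinitely many `n`.
-/

open MeasureTheory Filter ProbabilityTheory

theorem ENNReal.ofReal_le_tsum_indicator_le {a x : ℝ} (ha : 0 < a) (hx : 0 ≤ x) :
    ENNReal.ofReal x ≤ ∑' n : ℕ, {y | a * n ≤ y}.indicator (fun _ => ENNReal.ofReal a) x := by
  set N := ⌊x / a⌋₊
  have hmem : ∀ n ∈ Finset.range (N + 1), x ∈ {y | a * n ≤ y} := by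
    intro n hn
    have hnN : (n : ℝ) ≤ N := by exact_mod_cast Nat.lt_succ_iff.mp (Finset.mem_range.mp hn)
    have := hnN.trans (Nat.floor_le (div_nonneg hx ha.le))
    rw [le_div_iff₀ ha] at this
    simpa [mul_comm] using this
  calc ENNReal.ofReal x ≤ ENNReal.ofReal ((N + 1 : ℕ) * a) := by
        refine ENNReal.ofReal_le_ofReal ?_
        have := (div_lt_iff₀ ha).mp (Nat.lt_floor_add_one (x / a))
        push_cast
        linarith
    _ = ∑ n ∈ Finset.range (N + 1), {y | a * n ≤ y}.indicator (fun _ => ENNReal.ofReal a) x := by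
        rw [Finset.sum_congr rfl fun n hn => Set.indicator_of_mem (hmem n hn) _,
          Finset.sum_const, Finset.card_range, nsmul_eq_mul,
          ENNReal.ofReal_mul (Nat.cast_nonneg _), ENNReal.ofReal_natCast]
    _ ≤ _ := ENNReal.sum_le_tsum _

theorem tsum_measure_mul_le_eq_top_of_lintegral_eq_top {Ω : Type*} [MeasurableSpace Ω]
    {μ : Measure Ω} {X : Ω → ℝ} (hX : Measurable X) (hX0 : 0 ≤ X)
    (hinf : ∫⁻ ω, ENNReal.ofReal (X ω) ∂μ = ⊤) {a : ℝ} (ha : 0 < a) :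
    ∑' n : ℕ, μ {ω | a * n ≤ X ω} = ⊤ := by
  have hA : ∀ n : ℕ, MeasurableSet {ω | a * n ≤ X ω} := fun n =>
    measurableSet_le measurable_const hX
  have hle : ⊤ ≤ ENNReal.ofReal a * ∑' n : ℕ, μ {ω | a * n ≤ X ω} :=
    calc ⊤ = ∫⁻ ω, ENNReal.ofReal (X ω) ∂μ := hinf.symm
      _ ≤ ∫⁻ ω, ∑' n : ℕ, {ω | a * n ≤ X ω}.indicator (fun _ => ENNReal.ofReal a) ω ∂μ :=
        lintegral_mono fun ω => ENNReal.ofReal_le_tsum_indicator_le ha (hX0 ω)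
      _ = ∑' n : ℕ, ENNReal.ofReal a * μ {ω | a * n ≤ X ω} := by
        rw [lintegral_tsum fun n => (measurable_const.indicator (hA n)).aemeasurable]
        exact tsum_congr fun n => lintegral_indicator_const (hA n) _
      _ = _ := ENNReal.tsum_mul_left
  exact (ENNReal.mul_eq_top.mp (top_le_iff.mp hle)).elim (·.2)
    fun h => absurd h.1 ENNReal.ofReal_ne_top

theorem measure_limsup_preimage_eq_one_of_identDistrib {Ω β : Type*} [MeasurableSpace Ω]
    [MeasurableSpace β] {μ : Measure Ω} {Y : ℕ → Ω → β} {X : Ω → β}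
    (hY : ∀ n, Measurable (Y n)) (hindep : iIndepFun Y μ)
    (hident : ∀ n, IdentDistrib (Y n) X μ μ) {B : ℕ → Set β} (hB : ∀ n, MeasurableSet (B n))
    (hsum : ∑' n, μ (X ⁻¹' B n) = ⊤) :
    μ (limsup (fun n => Y n ⁻¹' B n) atTop) = 1 := by
  have hmeas : ∀ n, MeasurableSet (Y n ⁻¹' B n) := fun n => hY n (hB n)
  refine measure_limsup_eq_one hmeas ?_ ?_
  · rw [iIndepSet_iff_meas_biInter hmeas]
    exact fun S => hindep.measure_inter_preimage_eq_mul S fun i _ => hB i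
  · rwa [tsum_congr fun n => (hident n).measure_mem_eq (hB n)]

theorem Real.exp_mul_rpow_one_div_le_of_rpow_mul_le {r c x y : ℝ} (hr : 0 < r) (hc : 0 < c)
    (hx : 0 < x) (hy : 0 ≤ y) (h : c ^ r * x ≤ (max (Real.log y) 0) ^ r) :
    Real.exp (c * x ^ (1 / r)) ≤ y := by
  have hpos : 0 < c * x ^ (1 / r) := mul_pos hc (Real.rpow_pos_of_pos hx _)
  have hpow : c ^ r * x = (c * x ^ (1 / r)) ^ r := by
    rw [Real.mul_rpow hc.le (Real.rpow_nonneg hx.le _), ← Real.rpow_mul hx.le,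
      one_div_mul_cancel hr.ne', Real.rpow_one]
  rw [hpow, Real.rpow_le_rpow_iff hpos.le (le_max_right _ _) hr] at h
  have hlog : c * x ^ (1 / r) ≤ Real.log y := (le_max_iff.mp h).resolve_right hpos.not_ge
  have hy0 : 0 < y := hy.lt_of_ne fun h0 => by rw [← h0, Real.log_zero] at hlog; linarith
  exact (Real.le_log_iff_exp_le hy0).mp hlog

/-- Corollary `maxcor` (b).
If `(Y i)` are i.i.d. nonnegative real random variables with `E[(log⁺ Y 1)^r] = ∞` for some
`r > 0`, and `M' n := max_{1 ≤ j ≤ n} Y j`, then for every `c > 0`, almost surely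
`M' n ≥ exp (c n^{1/r})` for infinitely many `n`. -/
theorem stmt4
    {Ω : Type*} [MeasurableSpace Ω] (P : Measure Ω) [IsProbabilityMeasure P]
    (Y : ℕ → Ω → ℝ)
    (hYmeas : ∀ i, Measurable (Y i))
    (hYnonneg : ∀ i ω, 0 ≤ Y i ω)
    (hYindep : ProbabilityTheory.iIndepFun Y P)
    (hYident : ∀ i, ProbabilityTheory.IdentDistrib (Y i) (Y 1) P P)
    (r : ℝ) (hr : 0 < r)
    (hinf : ∫⁻ ω, ENNReal.ofReal ((max (Real.log (Y 1 ω)) 0) ^ r) ∂P = ⊤)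
    (M : ℕ → Ω → ℝ)
    (hM : ∀ n, 1 ≤ n → ∀ ω, IsGreatest ((fun j => Y j ω) '' (Set.Icc 1 n)) (M n ω))
    (c : ℝ) (hc : 0 < c) :
    P {ω | ∃ᶠ (n : ℕ) in atTop, Real.exp (c * (n : ℝ) ^ (1 / r)) ≤ M n ω} = 1 := by
  set logPosPow : ℝ → ℝ := fun y => (max (Real.log y) 0) ^ r
  have hmeas : Measurable logPosPow :=
    (Real.continuous_rpow_const hr.le).measurable.comp (Real.measurable_log.max measurable_const)
  set B : ℕ → Set ℝ := fun n => {y | c ^ r * n ≤ logPosPow y}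
  have hsum : ∑' n, P (Y 1 ⁻¹' B n) = ⊤ :=
    tsum_measure_mul_le_eq_top_of_lintegral_eq_top (hmeas.comp (hYmeas 1))
      (fun ω => Real.rpow_nonneg (le_max_right _ _) r) hinf (Real.rpow_pos_of_pos hc r)
  have hlim := measure_limsup_preimage_eq_one_of_identDistrib hYmeas hYindep hYident
    (fun n => measurableSet_le measurable_const hmeas) hsum
  refine le_antisymm prob_le_one (hlim ▸ measure_mono fun ω hω => ?_)
  refine ((mem_limsup_iff_frequently_mem.mp hω).and_eventually (eventually_ge_atTop 1)).mono ?_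
  rintro n ⟨hn, h1n⟩
  calc Real.exp (c * (n : ℝ) ^ (1 / r)) ≤ Y n ω :=
        Real.exp_mul_rpow_one_div_le_of_rpow_mul_le hr hc (by exact_mod_cast h1n) (hYnonneg n ω) hn
    _ ≤ M n ω := (hM n h1n ω).2 ⟨n, ⟨h1n, le_rfl⟩, rfl⟩
end

section
/- Let (Y_i)_{i∈ℕ} be an i.i.d. sequence of nonnegative real-valued random variables with E[(log⁺ Y_1)^r] = ∞ for some r > 0, and set M'_n := max_{1≤j≤n} Y_j. Then for every constant c > 0 and every non-decreasing sequence (s_i)_{i∈ℕ} of positive integers with lim_{i→∞} s_i = ∞ and inf_{i≥2} s_{i−1}/s_i > 0, almost surely M'_{s_i} ≥ exp(c s_i^{1/r}) for infinitely many i ∈ ℕ. -/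
/-!
Put `a = c / δ ^ (1 / r)`. Since `(log⁺ Y 1) ^ r / a ^ r` has infinite mean, the tail sums
`∑ₙ P((log⁺ Y 1) ^ r > a ^ r n) = ∑ₙ P(Y n > exp (a n ^ (1 / r)))` diverge, and the events are
independent, so by the second Borel–Cantelli lemma infinitely many of them occur. If one occurs
for `n` with `s (i - 1) < n ≤ s i`, then `δ s i ≤ s (i - 1) < n`, hence
`M'_{s i} ≥ Y n > exp (a (δ s i) ^ (1 / r)) = exp (c (s i) ^ (1 / r))`.
-/

open MeasureTheory Filter Real
open scoped ENNReal NNReal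

lemma ENNReal.le_tsum_ite_natCast_lt (x : ℝ≥0∞) :
    x ≤ ∑' n : ℕ, if (n : ℝ≥0∞) < x then 1 else 0 := by
  rcases eq_or_ne x ∞ with rfl | hx
  · simp
  lift x to ℝ≥0 using hx
  have hceil : ∀ n ∈ Finset.range ⌈x⌉₊, (if (n : ℝ≥0∞) < x then 1 else 0 : ℝ≥0∞) = 1 :=
    fun n hn => if_pos (by exact_mod_cast Nat.lt_ceil.1 (Finset.mem_range.1 hn))
  calc (x : ℝ≥0∞) ≤ (⌈x⌉₊ : ℝ≥0) := by exact_mod_cast Nat.le_ceil x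
    _ = ∑ n ∈ Finset.range ⌈x⌉₊, if (n : ℝ≥0∞) < x then 1 else 0 := by
      rw [Finset.sum_congr rfl hceil]; simp
    _ ≤ _ := ENNReal.sum_le_tsum _

lemma lintegral_le_tsum_measure_natCast_lt {α : Type*} [MeasurableSpace α] {μ : Measure α}
    {f : α → ℝ≥0∞} (hf : Measurable f) :
    ∫⁻ x, f x ∂μ ≤ ∑' n : ℕ, μ {x | (n : ℝ≥0∞) < f x} := by
  have hmeas : ∀ n : ℕ, MeasurableSet {x | (n : ℝ≥0∞) < f x} := fun n => hf measurableSet_Ioi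
  calc ∫⁻ x, f x ∂μ ≤ ∫⁻ x, ∑' n : ℕ, {x | (n : ℝ≥0∞) < f x}.indicator 1 x ∂μ := by
        refine lintegral_mono fun x => ?_
        simpa only [Set.indicator_apply, Set.mem_ofPred_eq, Pi.one_apply]
          using ENNReal.le_tsum_ite_natCast_lt (f x)
    _ = ∑' n : ℕ, μ {x | (n : ℝ≥0∞) < f x} := by
      rw [lintegral_tsum fun n => (measurable_one.indicator (hmeas n)).aemeasurable]
      exact tsum_congr fun n => by
        simp only [Pi.one_def, lintegral_indicator_const (hmeas n), one_mul]

lemma exp_mul_rpow_lt_of_mul_lt_rpow {x a r t : ℝ} (hx : 0 ≤ x) (ha : 0 < a) (hr : 0 < r)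
    (ht : 0 ≤ t) (h : a ^ r * t < max (log x) 0 ^ r) : exp (a * t ^ (1 / r)) < x := by
  have hpos : 0 ≤ a * t ^ (1 / r) := by positivity
  have hmax : a * t ^ (1 / r) < max (log x) 0 := by
    rwa [← rpow_lt_rpow_iff hpos (le_max_right _ _) hr, mul_rpow ha.le (by positivity), one_div,
      rpow_inv_rpow ht hr.ne']
  have hlog : a * t ^ (1 / r) < log x := (lt_max_iff.1 hmax).resolve_right hpos.not_gt
  have hx0 : 0 < x := hx.lt_of_ne <| by
    rintro rfl
    rw [log_zero] at hlog
    linarith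
  exact (lt_log_iff_exp_lt hx0).1 hlog

lemma tsum_measure_exp_mul_rpow_lt_eq_top {Ω : Type*} [MeasurableSpace Ω] {μ : Measure Ω}
    {X : Ω → ℝ} (hX : Measurable X) (hX0 : ∀ ω, 0 ≤ X ω) {r a : ℝ} (hr : 0 < r) (ha : 0 < a)
    (hinf : ∫⁻ ω, ENNReal.ofReal (max (log (X ω)) 0 ^ r) ∂μ = ∞) :
    ∑' n : ℕ, μ {ω | exp (a * (n : ℝ) ^ (1 / r)) < X ω} = ∞ := by
  set b := ENNReal.ofReal (a ^ r)
  have hb0 : b ≠ 0 := by simpa [b] using rpow_pos_of_pos ha r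
  have hbtop : b ≠ ∞ := ENNReal.ofReal_ne_top
  set f : Ω → ℝ≥0∞ := fun ω => ENNReal.ofReal (max (log (X ω)) 0 ^ r) / b
  have hf : Measurable f := by fun_prop
  have hfint : ∫⁻ ω, f ω ∂μ = ∞ := by
    simp only [f, div_eq_mul_inv]
    rw [lintegral_mul_const' _ _ (ENNReal.inv_ne_top.2 hb0), hinf,
      ENNReal.top_mul (ENNReal.inv_ne_zero.2 hbtop)]
  refine top_unique (hfint ▸ (lintegral_le_tsum_measure_natCast_lt hf).trans
    (ENNReal.tsum_le_tsum fun n => measure_mono fun ω hω => ?_))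
  rw [Set.mem_ofPred_eq, ENNReal.lt_div_iff_mul_lt (Or.inl hb0) (Or.inl hbtop),
    ← ENNReal.ofReal_natCast, ← ENNReal.ofReal_mul (Nat.cast_nonneg _),
    ENNReal.ofReal_lt_ofReal_iff'] at hω
  exact exp_mul_rpow_lt_of_mul_lt_rpow (hX0 ω) ha hr (Nat.cast_nonneg n)
    (by rw [mul_comm]; exact hω.1)

lemma ProbabilityTheory.iIndepFun.iIndepSet_preimage {Ω ι β : Type*} [MeasurableSpace Ω]
    [mβ : MeasurableSpace β] {μ : Measure Ω} {f : ι → Ω → β} (hf : iIndepFun f μ)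
    (hmeas : ∀ i, Measurable (f i)) {t : ι → Set β} (ht : ∀ i, MeasurableSet (t i)) :
    iIndepSet (fun i => f i ⁻¹' t i) μ :=
  hf.iIndep.iIndepSets'.iIndepSet_of_mem (fun i => (⟨t i, ht i, rfl⟩ : MeasurableSet[(mβ).comap (f i)] (f i ⁻¹' t i)))
    fun i => hmeas i (ht i)

lemma exists_lt_sub_one_lt_le {s : ℕ → ℕ} (hs : Tendsto s atTop atTop) {N n : ℕ}
    (hn : s N < n) : ∃ i, N < i ∧ s (i - 1) < n ∧ n ≤ s i := by
  classical
  have hex : ∃ i, N < i ∧ n ≤ s i := ((eventually_gt_atTop N).and (hs.eventually_ge_atTop n)).exists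
  obtain ⟨hNi, hni⟩ := Nat.find_spec hex
  refine ⟨Nat.find hex, hNi, ?_, hni⟩
  by_contra! hle
  rcases (Nat.le_sub_one_of_lt hNi).eq_or_lt with h | h
  · rw [← h] at hle
    omega
  · exact Nat.find_min hex (Nat.sub_one_lt_of_lt hNi) ⟨h, hle⟩

lemma frequently_le_of_frequently_le_of_ratio {y m : ℕ → ℝ} {φ : ℝ → ℝ} {s : ℕ → ℕ} {δ : ℝ}
    (hφ : MonotoneOn φ (Set.Ici 0)) (hδ : 0 < δ) (hs : Tendsto s atTop atTop)
    (hratio : ∀ i, 2 ≤ i → δ ≤ (s (i - 1) : ℝ) / (s i : ℝ))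
    (hm : ∀ n, 1 ≤ n → m n ∈ upperBounds (y '' Set.Icc 1 n))
    (hy : ∃ᶠ n : ℕ in atTop, φ n ≤ y n) : ∃ᶠ i in atTop, φ (δ * s i) ≤ m (s i) := by
  rw [frequently_atTop] at hy ⊢
  intro N
  obtain ⟨n, hnN, hn⟩ := hy (s (max N 1) + 1)
  obtain ⟨i, hNi, hprev, hni⟩ := exists_lt_sub_one_lt_le hs (show s (max N 1) < n by omega)
  have hn1 : 1 ≤ n := by omega
  have hsi : (0 : ℝ) < s i := by exact_mod_cast hn1.trans hni
  have hδs : δ * s i ≤ n := calc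
    δ * s i ≤ s (i - 1) := (le_div_iff₀ hsi).1 (hratio i (by omega))
    _ ≤ n := by exact_mod_cast hprev.le
  refine ⟨i, by omega, ?_⟩
  calc φ (δ * s i) ≤ φ n := hφ (Set.mem_Ici.2 (by positivity)) (Set.mem_Ici.2 (Nat.cast_nonneg n)) hδs
    _ ≤ y n := hn
    _ ≤ m (s i) := hm (s i) (hn1.trans hni) ⟨n, ⟨hn1, hni⟩, rfl⟩

theorem stmt5_general
    {Ω : Type*} [MeasurableSpace Ω] (P : Measure Ω) [IsProbabilityMeasure P]
    (Y : ℕ → Ω → ℝ)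
    (hYmeas : ∀ i, Measurable (Y i))
    (hYnonneg : ∀ i ω, 0 ≤ Y i ω)
    (hYindep : ProbabilityTheory.iIndepFun Y P)
    (hYident : ∀ i, ProbabilityTheory.IdentDistrib (Y i) (Y 1) P P)
    (r : ℝ) (hr : 0 < r)
    (hinf : ∫⁻ ω, ENNReal.ofReal ((max (Real.log (Y 1 ω)) 0) ^ r) ∂P = ⊤)
    (M : ℕ → Ω → ℝ)
    (hM : ∀ n, 1 ≤ n → ∀ ω, IsGreatest ((fun j => Y j ω) '' (Set.Icc 1 n)) (M n ω))
    (c : ℝ) (hc : 0 < c)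
    (s : ℕ → ℕ)
    (hs_tendsto : Tendsto s atTop atTop)
    (hs_ratio : ∃ δ : ℝ, 0 < δ ∧ ∀ i, 2 ≤ i → δ ≤ (s (i - 1) : ℝ) / (s i : ℝ)) :
    P {ω | ∃ᶠ (i : ℕ) in atTop,
        Real.exp (c * (s i : ℝ) ^ (1 / r)) ≤ M (s i) ω} = 1 := by
  obtain ⟨δ, hδ, hratio⟩ := hs_ratio
  set a := c / δ ^ (1 / r) with ha_def
  have ha : 0 < a := by positivity
  have hscale : ∀ t : ℝ, 0 ≤ t → a * (δ * t) ^ (1 / r) = c * t ^ (1 / r) := fun t ht => by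
    rw [mul_rpow hδ.le ht, ← mul_assoc, ha_def, div_mul_cancel₀ c (rpow_pos_of_pos hδ _).ne']
  set A : ℕ → Set Ω := fun n => Y n ⁻¹' Set.Ioi (exp (a * (n : ℝ) ^ (1 / r)))
  have hA : ∀ n, MeasurableSet (A n) := fun n => hYmeas n measurableSet_Ioi
  have hsum : ∑' n, P (A n) = ∞ := by
    rw [tsum_congr fun n => (hYident n).measure_mem_eq measurableSet_Ioi]
    exact tsum_measure_exp_mul_rpow_lt_eq_top (hYmeas 1) (hYnonneg 1) hr ha hinf
  have hlimsup : P (limsup A atTop) = 1 := ProbabilityTheory.measure_limsup_eq_one hA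
    (hYindep.iIndepSet_preimage hYmeas fun _ => measurableSet_Ioi) hsum
  have hφ : MonotoneOn (fun t => exp (a * t ^ (1 / r))) (Set.Ici 0) := fun t ht u _ htu =>
    exp_le_exp.2 (mul_le_mul_of_nonneg_left (rpow_le_rpow ht htu (by positivity)) ha.le)
  refine le_antisymm prob_le_one (hlimsup ▸ measure_mono fun ω hω => ?_)
  refine (frequently_le_of_frequently_le_of_ratio hφ hδ hs_tendsto hratio
    (fun n hn => (hM n hn ω).2) ((mem_limsup_iff_frequently_mem.1 hω).mono fun n hn => hn.le)).mono
    fun i hi => ?_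
  rwa [hscale _ (Nat.cast_nonneg _)] at hi

/-- Corollary `maxcor` (c).
If `(Y i)` are i.i.d. nonnegative real random variables with `E[(log⁺ Y 1)^r] = ∞` for some
`r > 0`, and `M' n := max_{1 ≤ j ≤ n} Y j`, then for every `c > 0` and every non-decreasing
sequence `(s i)` of positive integers with `s i → ∞` and `inf_{i ≥ 2} s (i-1) / s i > 0`,
almost surely `M'_{s i} ≥ exp (c (s i)^{1/r})` for infinitely many `i`. -/
theorem stmt5
    {Ω : Type*} [MeasurableSpace Ω] (P : Measure Ω) [IsProbabilityMeasure P]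
    (Y : ℕ → Ω → ℝ)
    (hYmeas : ∀ i, Measurable (Y i))
    (hYnonneg : ∀ i ω, 0 ≤ Y i ω)
    (hYindep : ProbabilityTheory.iIndepFun Y P)
    (hYident : ∀ i, ProbabilityTheory.IdentDistrib (Y i) (Y 1) P P)
    (r : ℝ) (hr : 0 < r)
    (hinf : ∫⁻ ω, ENNReal.ofReal ((max (Real.log (Y 1 ω)) 0) ^ r) ∂P = ⊤)
    (M : ℕ → Ω → ℝ)
    (hM : ∀ n, 1 ≤ n → ∀ ω, IsGreatest ((fun j => Y j ω) '' (Set.Icc 1 n)) (M n ω))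
    (c : ℝ) (hc : 0 < c)
    (s : ℕ → ℕ)
    (hs_pos : ∀ i, 1 ≤ i → 0 < s i)
    (hs_mono : ∀ i j, 1 ≤ i → i ≤ j → s i ≤ s j)
    (hs_tendsto : Tendsto s atTop atTop)
    (hs_ratio : ∃ δ : ℝ, 0 < δ ∧ ∀ i, 2 ≤ i → δ ≤ (s (i - 1) : ℝ) / (s i : ℝ)) :
    P {ω | ∃ᶠ (i : ℕ) in atTop,
        Real.exp (c * (s i : ℝ) ^ (1 / r)) ≤ M (s i) ω} = 1 :=
  stmt5_general P Y hYmeas hYnonneg hYindep hYident r hr hinf M hM c hc s hs_tendsto hs_ratio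
end

section
/- Let (Y_j)_{j∈ℕ} be i.i.d. nonnegative real-valued random variables with E[Y_1] = ∞, and let S_n := Y_1 + ⋯ + Y_n. Then there exists a constant b > 0 such that P(S_n ≤ n) ≤ 2·exp(−n·b) for all n ∈ ℕ. -/
open MeasureTheory ProbabilityTheory Filter Real
open scoped ENNReal Topology Finset

/-!
Truncate: since `E[Y] = ∞`, some `c` has `E[min(Y, c)] ≥ 3`. From `exp (-s) ≤ 1 - s + s²`
for `s ≥ 0` one gets `E[exp (-t Y)] ≤ 1 - t E[min(Y, c)] + t² c² ≤ exp (-2t)` as soon as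
`t c² ≤ 1`, e.g. for `t = 1 / (c² + 1)`. Chernoff's bound for the i.i.d. sum then gives
`P(S_n ≤ n) ≤ exp (t n) E[exp (-t Y)]ⁿ ≤ exp (-t n)`.
-/

lemma Real.exp_neg_le_one_sub_add_sq {s : ℝ} (hs : 0 ≤ s) : exp (-s) ≤ 1 - s + s ^ 2 := by
  have hpos : 0 < 1 + s := by linarith
  calc exp (-s) = (exp s)⁻¹ := exp_neg s
    _ ≤ (1 + s)⁻¹ := inv_anti₀ hpos (by linarith [add_one_le_exp s])
    _ ≤ 1 - s + s ^ 2 := by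
      rw [inv_le_iff_one_le_mul₀ hpos]
      nlinarith [pow_nonneg hs 3]

lemma Real.exp_neg_mul_le_of_min {t y c : ℝ} (ht : 0 ≤ t) (hy : 0 ≤ y) (hc : 0 ≤ c) :
    exp (-t * y) ≤ 1 - t * min y c + t ^ 2 * c ^ 2 := by
  have hm0 : 0 ≤ min y c := le_min hy hc
  have hsq : (t * min y c) ^ 2 ≤ t ^ 2 * c ^ 2 := by
    rw [mul_pow]
    gcongr
    exact min_le_right y c
  calc exp (-t * y) ≤ exp (-(t * min y c)) := by
        rw [neg_mul, exp_le_exp, neg_le_neg_iff]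
        exact mul_le_mul_of_nonneg_left (min_le_left y c) ht
    _ ≤ 1 - t * min y c + (t * min y c) ^ 2 := exp_neg_le_one_sub_add_sq (mul_nonneg ht hm0)
    _ ≤ 1 - t * min y c + t ^ 2 * c ^ 2 := by linarith

namespace ProbabilityTheory

variable {Ω : Type*} [MeasurableSpace Ω] {μ : Measure Ω} {X : Ω → ℝ}

lemma integrable_min_const [IsFiniteMeasure μ] (hX : Measurable X) (hX0 : ∀ ω, 0 ≤ X ω)
    {c : ℝ} (hc : 0 ≤ c) : Integrable (fun ω ↦ min (X ω) c) μ :=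
  .of_mem_Icc 0 c (hX.min measurable_const).aemeasurable
    (ae_of_all _ fun ω ↦ ⟨le_min (hX0 ω) hc, min_le_right _ _⟩)

lemma integrable_exp_mul_of_nonpos_of_nonneg [IsFiniteMeasure μ] (hX : Measurable X)
    (hX0 : ∀ ω, 0 ≤ X ω) {t : ℝ} (ht : t ≤ 0) : Integrable (fun ω ↦ exp (t * X ω)) μ :=
  .of_mem_Icc 0 1 (hX.const_mul t).exp.aemeasurable
    (ae_of_all _ fun ω ↦
      ⟨(exp_pos _).le, exp_le_one_iff.2 (mul_nonpos_of_nonpos_of_nonneg ht (hX0 ω))⟩)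

lemma exists_le_integral_min_of_lintegral_eq_top [IsFiniteMeasure μ] (hX : Measurable X)
    (hX0 : ∀ ω, 0 ≤ X ω) (hinf : ∫⁻ ω, ENNReal.ofReal (X ω) ∂μ = ∞) (a : ℝ) :
    ∃ c : ℕ, a ≤ ∫ ω, min (X ω) c ∂μ := by
  have hlim : Tendsto (fun c : ℕ ↦ ∫⁻ ω, ENNReal.ofReal (min (X ω) c) ∂μ) atTop (𝓝 ∞) := by
    rw [← hinf]
    refine lintegral_tendsto_of_tendsto_of_monotone
      (fun c ↦ (hX.min measurable_const).ennreal_ofReal.aemeasurable)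
      (ae_of_all _ fun ω i j hij ↦ ENNReal.ofReal_le_ofReal (min_le_min_left _ (by simpa)))
      (ae_of_all _ fun ω ↦ tendsto_const_nhds.congr' ?_)
    filter_upwards [eventually_ge_atTop ⌈X ω⌉₊] with c hc
    rw [min_eq_left ((Nat.le_ceil _).trans (by exact_mod_cast hc))]
  obtain ⟨c, hc⟩ := (hlim.eventually (Ioi_mem_nhds ENNReal.ofReal_lt_top)).exists
  refine ⟨c, le_of_lt (ENNReal.ofReal_lt_ofReal_iff'.1 ?_).1⟩
  rwa [ofReal_integral_eq_lintegral_ofReal (integrable_min_const hX hX0 c.cast_nonneg)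
    (ae_of_all _ fun ω ↦ le_min (hX0 ω) c.cast_nonneg)]

lemma mgf_neg_le_exp_of_min [IsProbabilityMeasure μ] (hX : Measurable X) (hX0 : ∀ ω, 0 ≤ X ω)
    {t c : ℝ} (ht : 0 ≤ t) (hc : 0 ≤ c) :
    mgf X μ (-t) ≤ exp (-t * ∫ ω, min (X ω) c ∂μ + t ^ 2 * c ^ 2) := by
  have hmin := integrable_min_const (μ := μ) hX hX0 hc
  calc mgf X μ (-t) ≤ ∫ ω, (1 + t ^ 2 * c ^ 2 - t * min (X ω) c) ∂μ := by
        refine integral_mono (integrable_exp_mul_of_nonpos_of_nonneg hX hX0 (neg_nonpos.2 ht))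
          ((integrable_const _).sub (hmin.const_mul t)) fun ω ↦ ?_
        linarith [exp_neg_mul_le_of_min ht (hX0 ω) hc]
    _ = 1 - t * ∫ ω, min (X ω) c ∂μ + t ^ 2 * c ^ 2 := by
        rw [integral_sub (integrable_const _) (hmin.const_mul t), integral_const_mul,
          integral_const, probReal_univ, one_smul]
        ring
    _ ≤ exp (-t * ∫ ω, min (X ω) c ∂μ + t ^ 2 * c ^ 2) := by
        linarith [add_one_le_exp (-t * ∫ ω, min (X ω) c ∂μ + t ^ 2 * c ^ 2)]

lemma measureReal_sum_le_le_exp_mul_mgf_pow [IsProbabilityMeasure μ] {ι : Type*}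
    {Y : ι → Ω → ℝ} {k : ι} (hY : ∀ i, Measurable (Y i)) (hY0 : ∀ i ω, 0 ≤ Y i ω)
    (hindep : iIndepFun Y μ) (hident : ∀ i, IdentDistrib (Y i) (Y k) μ μ)
    (s : Finset ι) (ε : ℝ) {t : ℝ} (ht : 0 ≤ t) :
    μ.real {ω | ∑ i ∈ s, Y i ω ≤ ε} ≤ exp (t * ε) * mgf (Y k) μ (-t) ^ #s := by
  have hS : Measurable (∑ i ∈ s, Y i) := by fun_prop
  have hS0 : ∀ ω, 0 ≤ (∑ i ∈ s, Y i) ω := fun ω ↦ by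
    simpa only [Finset.sum_apply] using Finset.sum_nonneg fun i _ ↦ hY0 i ω
  have hchernoff := measure_le_le_exp_mul_mgf (μ := μ) ε (neg_nonpos.2 ht)
    (integrable_exp_mul_of_nonpos_of_nonneg hS hS0 (neg_nonpos.2 ht))
  rw [hindep.mgf_sum hY, neg_neg,
    Finset.prod_eq_pow_card fun i _ ↦ mgf_congr_of_identDistrib _ _ (hident i) _] at hchernoff
  simpa only [Finset.sum_apply] using hchernoff

end ProbabilityTheory

/-- Cramér bound `cramer`.
If `(Y j)` are i.i.d. nonnegative real random variables with `E[Y 1] = ∞` and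
`S n := Y 1 + ⋯ + Y n`, then there is `b > 0` with `P(S n ≤ n) ≤ 2 exp(−n b)` for all
`n ≥ 1`. -/
theorem stmt9
    {Ω : Type*} [MeasurableSpace Ω] (P : Measure Ω) [IsProbabilityMeasure P]
    (Y : ℕ → Ω → ℝ)
    (hYmeas : ∀ i, Measurable (Y i))
    (hYnonneg : ∀ i ω, 0 ≤ Y i ω)
    (hYindep : ProbabilityTheory.iIndepFun Y P)
    (hYident : ∀ i, ProbabilityTheory.IdentDistrib (Y i) (Y 1) P P)
    (hinf : ∫⁻ ω, ENNReal.ofReal (Y 1 ω) ∂P = ⊤) :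
    ∃ b : ℝ, 0 < b ∧ ∀ n : ℕ, 1 ≤ n →
      P {ω | ∑ j ∈ Finset.Icc 1 n, Y j ω ≤ (n : ℝ)}
        ≤ ENNReal.ofReal (2 * Real.exp (-(n : ℝ) * b)) := by
  obtain ⟨c, hc⟩ := exists_le_integral_min_of_lintegral_eq_top (hYmeas 1) (hYnonneg 1) hinf 3
  set t : ℝ := 1 / ((c : ℝ) ^ 2 + 1) with ht
  have htpos : 0 < t := by positivity
  have htc : t * (c : ℝ) ^ 2 ≤ 1 := by
    rw [ht, div_mul_eq_mul_div, one_mul, div_le_one (by positivity)]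
    linarith
  have hmgf : mgf (Y 1) P (-t) ≤ exp (-2 * t) :=
    (mgf_neg_le_exp_of_min (hYmeas 1) (hYnonneg 1) htpos.le c.cast_nonneg).trans
      (exp_le_exp.2 (by nlinarith))
  refine ⟨t, htpos, fun n _ ↦ ?_⟩
  have hsum := measureReal_sum_le_le_exp_mul_mgf_pow hYmeas hYnonneg hYindep hYident
    (Finset.Icc 1 n) n htpos.le
  rw [Nat.card_Icc, Nat.add_sub_cancel] at hsum
  rw [← ofReal_measureReal]
  refine ENNReal.ofReal_le_ofReal (hsum.trans ?_)
  calc exp (t * n) * mgf (Y 1) P (-t) ^ n ≤ exp (t * n) * exp (-2 * t) ^ n := by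
        gcongr
        exact mgf_nonneg
    _ = exp (-n * t) := by rw [← exp_nat_mul, ← exp_add]; ring_nf
    _ ≤ 2 * exp (-n * t) := by linarith [exp_pos (-n * t)]
end
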